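/- For jointly distributed finite random variables X, Y_1, Y_2, W_1, W_2 satisfying the Markov chain (W_1, W_2) ↔ X ↔ Y_1 ↔ Y_2, the following identity holds: I(X; W_2 | Y_2) + I(X; W_1 | W_2, Y_1) = I(X; W_1, W_2 | Y_1, Y_2) + I(Y_1; W_2 | Y_2) + I(X; W_1, W_2 | Y_1) − I(X; W_1, W_2 | Y_1, Y_2). -/

import Mathlib

open scoped BigOperators

namespace SIScalable

variable {Ω : Type*} [Fintype Ω]

/-- Probability that a finite random variable `X` takes value `a`, under pmf `μ`. -/
noncomputable def pr (μ : Ω → ℝ) {A : Type*} [DecidableEq A] (X : Ω → A) (a : A) : ℝ :=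
  ∑ ω, if X ω = a then μ ω else 0

/-- `μ` is a probability mass function. -/
def IsPMF (μ : Ω → ℝ) : Prop := (∀ ω, 0 ≤ μ ω) ∧ ∑ ω, μ ω = 1

/-- Shannon entropy (in bits) of a finite random variable. -/
noncomputable def ent (μ : Ω → ℝ) {A : Type*} [Fintype A] [DecidableEq A] (X : Ω → A) : ℝ :=
  -∑ a : A, pr μ X a * Real.logb 2 (pr μ X a)

/-- Conditional Shannon entropy `H(X|Y)`. -/
noncomputable def condEnt (μ : Ω → ℝ) {A B : Type*} [Fintype A] [DecidableEq A]
    [Fintype B] [DecidableEq B] (X : Ω → A) (Y : Ω → B) : ℝ :=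
  ent μ (fun ω => (X ω, Y ω)) - ent μ Y

/-- Conditional mutual information `I(X;Y|Z)`. -/
noncomputable def cmi (μ : Ω → ℝ) {A B C : Type*} [Fintype A] [DecidableEq A]
    [Fintype B] [DecidableEq B] [Fintype C] [DecidableEq C]
    (X : Ω → A) (Y : Ω → B) (Z : Ω → C) : ℝ :=
  ent μ (fun ω => (X ω, Z ω)) + ent μ (fun ω => (Y ω, Z ω))
    - ent μ (fun ω => (X ω, Y ω, Z ω)) - ent μ Z

/-! By the chain rule `I(X; W₁W₂ | Y₁) = I(X; W₂ | Y₁) + I(X; W₁ | W₂, Y₁)`, the identity reduces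
to `I(X; W₂ | Y₂) = I(Y₁; W₂ | Y₂) + I(X; W₂ | Y₁)` for the Markov chain `W₂ - X - Y₁ - Y₂`
obtained by summing out `W₁`. Written in entropies, this is the sum of the identities
`H(W, B, C) + H(B) = H(W, B) + H(B, C)` for the three sub-chains `W₂ - X - Y₂`, `W₂ - Y₁ - Y₂`
and `W₂ - X - Y₁`; each holds because `log p(w,b,c) + log p(b) = log p(w,b) + log p(b,c)` on the
support. -/

section Probability

variable {μ : Ω → ℝ} {α β γ δ : Type*} [DecidableEq α] [DecidableEq β] [DecidableEq γ]
  [DecidableEq δ]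

theorem pr_nonneg (hμ : ∀ ω, 0 ≤ μ ω) (X : Ω → α) (a : α) : 0 ≤ pr μ X a :=
  Finset.sum_nonneg fun ω _ => by split_ifs <;> simp [hμ ω]

theorem pr_congr {X : Ω → α} {Y : Ω → β} {a : α} {b : β} (h : ∀ ω, X ω = a ↔ Y ω = b) :
    pr μ X a = pr μ Y b := by
  simp only [pr, h]

theorem pr_le_pr_of_imp (hμ : ∀ ω, 0 ≤ μ ω) {X : Ω → α} {Y : Ω → β} {a : α} {b : β}
    (h : ∀ ω, X ω = a → Y ω = b) : pr μ X a ≤ pr μ Y b :=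
  Finset.sum_le_sum fun ω _ => by
    split_ifs with hX hY
    · exact le_rfl
    · exact absurd (h ω hX) hY
    · exact hμ ω
    · exact le_rfl

theorem pr_eq_zero_of_imp (hμ : ∀ ω, 0 ≤ μ ω) {X : Ω → α} {Y : Ω → β} {a : α} {b : β}
    (h : ∀ ω, X ω = a → Y ω = b) (hb : pr μ Y b = 0) : pr μ X a = 0 :=
  le_antisymm (hb ▸ pr_le_pr_of_imp hμ h) (pr_nonneg hμ X a)

theorem pr_pair_eq_zero_left (hμ : ∀ ω, 0 ≤ μ ω) {A : Ω → α} {a : α} (ha : pr μ A a = 0)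
    (B : Ω → β) (b : β) : pr μ (fun ω => (A ω, B ω)) (a, b) = 0 :=
  pr_eq_zero_of_imp hμ (fun _ h => congrArg Prod.fst h) ha

theorem pr_pair_eq_zero_right (hμ : ∀ ω, 0 ≤ μ ω) {B : Ω → β} {b : β} (hb : pr μ B b = 0)
    (A : Ω → α) (a : α) : pr μ (fun ω => (A ω, B ω)) (a, b) = 0 :=
  pr_eq_zero_of_imp hμ (fun _ h => congrArg Prod.snd h) hb

theorem le_pr_apply (hμ : ∀ ω, 0 ≤ μ ω) (X : Ω → α) (ω : Ω) : μ ω ≤ pr μ X (X ω) := by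
  unfold pr
  simpa using Finset.single_le_sum (f := fun ω' => if X ω' = X ω then μ ω' else 0)
    (fun ω' _ => by split_ifs <;> simp [hμ ω']) (Finset.mem_univ ω)

theorem pr_apply_ne_zero (hμ : ∀ ω, 0 ≤ μ ω) {ω : Ω} (hω : 0 < μ ω) (X : Ω → α) :
    pr μ X (X ω) ≠ 0 :=
  (hω.trans_le (le_pr_apply hμ X ω)).ne'

theorem sum_pr_eq_of_iff [Fintype γ] {X : Ω → α} {Y : Ω → β} (Z : Ω → γ) (e : γ → α) {b : β}
    (h : ∀ ω z, X ω = e z ↔ Z ω = z ∧ Y ω = b) : ∑ z, pr μ X (e z) = pr μ Y b := by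
  simp only [pr, h]
  rw [Finset.sum_comm]
  simp [ite_and]

theorem sum_pr_fst [Fintype α] (A : Ω → α) (B : Ω → β) (b : β) :
    ∑ a, pr μ (fun ω => (A ω, B ω)) (a, b) = pr μ B b :=
  sum_pr_eq_of_iff A _ fun _ _ => Prod.ext_iff

theorem sum_pr_snd [Fintype β] (A : Ω → α) (B : Ω → β) (a : α) :
    ∑ b, pr μ (fun ω => (A ω, B ω)) (a, b) = pr μ A a :=
  sum_pr_eq_of_iff B _ fun _ _ => by simp [and_comm]

theorem sum_pr_snd_of_triple [Fintype β] (A : Ω → α) (B : Ω → β) (C : Ω → γ) (a : α) (c : γ) :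
    ∑ b, pr μ (fun ω => (A ω, B ω, C ω)) (a, b, c) = pr μ (fun ω => (A ω, C ω)) (a, c) :=
  sum_pr_eq_of_iff B _ fun _ _ => by simp [and_left_comm]

theorem sum_pr_third_of_quadruple [Fintype γ] (A : Ω → α) (B : Ω → β) (C : Ω → γ) (D : Ω → δ)
    (a : α) (b : β) (d : δ) :
    ∑ c, pr μ (fun ω => (A ω, B ω, C ω, D ω)) (a, b, c, d)
      = pr μ (fun ω => (A ω, B ω, D ω)) (a, b, d) :=
  sum_pr_eq_of_iff C _ fun _ _ => by simp [and_left_comm]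

theorem sum_pr_fourth_of_quadruple [Fintype δ] (A : Ω → α) (B : Ω → β) (C : Ω → γ) (D : Ω → δ)
    (a : α) (b : β) (c : γ) :
    ∑ d, pr μ (fun ω => (A ω, B ω, C ω, D ω)) (a, b, c, d)
      = pr μ (fun ω => (A ω, B ω, C ω)) (a, b, c) :=
  sum_pr_eq_of_iff D _ fun _ _ => by simp [and_comm, and_assoc]

end Probability

section Entropy

variable {μ : Ω → ℝ} {α β γ δ : Type*} [Fintype α] [DecidableEq α] [Fintype β] [DecidableEq β]
  [Fintype γ] [DecidableEq γ] [Fintype δ] [DecidableEq δ]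

theorem sum_pr_mul (X : Ω → α) (F : α → ℝ) : ∑ a, pr μ X a * F a = ∑ ω, μ ω * F (X ω) := by
  simp only [pr, Finset.sum_mul, ite_mul, zero_mul]
  rw [Finset.sum_comm]
  simp

theorem ent_eq_sum (X : Ω → α) : ent μ X = -∑ ω, μ ω * Real.logb 2 (pr μ X (X ω)) := by
  rw [ent, sum_pr_mul X fun a => Real.logb 2 (pr μ X a)]

theorem ent_congr {X : Ω → α} {Y : Ω → β} (h : ∀ ω ω', X ω = X ω' ↔ Y ω = Y ω') :
    ent μ X = ent μ Y := by
  simp only [ent_eq_sum, pr_congr fun ω' => h ω' _]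

def IsMarkovChain (μ : Ω → ℝ) (A : Ω → α) (B : Ω → β) (C : Ω → γ) : Prop :=
  ∀ a b c, pr μ (fun ω => (A ω, B ω, C ω)) (a, b, c) * pr μ B b
    = pr μ (fun ω => (A ω, B ω)) (a, b) * pr μ (fun ω => (B ω, C ω)) (b, c)

theorem IsMarkovChain.ent_add (hμ : ∀ ω, 0 ≤ μ ω) {A : Ω → α} {B : Ω → β} {C : Ω → γ}
    (h : IsMarkovChain μ A B C) :
    ent μ (fun ω => (A ω, B ω, C ω)) + ent μ B
      = ent μ (fun ω => (A ω, B ω)) + ent μ (fun ω => (B ω, C ω)) := by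
  have pointwise : ∀ ω,
      μ ω * Real.logb 2 (pr μ (fun ω => (A ω, B ω, C ω)) (A ω, B ω, C ω))
          + μ ω * Real.logb 2 (pr μ B (B ω))
        = μ ω * Real.logb 2 (pr μ (fun ω => (A ω, B ω)) (A ω, B ω))
          + μ ω * Real.logb 2 (pr μ (fun ω => (B ω, C ω)) (B ω, C ω)) := by
    intro ω
    rcases (hμ ω).eq_or_lt with hω | hω
    · simp [← hω]
    rw [← mul_add, ← mul_add, ← Real.logb_mul (pr_apply_ne_zero hμ hω _)
      (pr_apply_ne_zero hμ hω B), ← Real.logb_mul (pr_apply_ne_zero hμ hω _)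
      (pr_apply_ne_zero hμ hω _), h]
  have := Finset.sum_congr rfl fun ω (_ : ω ∈ Finset.univ) => pointwise ω
  simp only [Finset.sum_add_distrib] at this
  simp only [ent_eq_sum]
  linarith

theorem ent_triple_swap (A : Ω → α) (B : Ω → β) (C : Ω → γ) :
    ent μ (fun ω => (A ω, B ω, C ω)) = ent μ (fun ω => (B ω, A ω, C ω)) :=
  ent_congr fun _ _ => by simp [and_left_comm]

theorem cmi_pair_right (A : Ω → α) (B : Ω → β) (C : Ω → γ) (D : Ω → δ) :
    cmi μ A (fun ω => (B ω, C ω)) D = cmi μ A C D + cmi μ A B (fun ω => (C ω, D ω)) := by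
  have h₁ : ent μ (fun ω => ((B ω, C ω), D ω)) = ent μ (fun ω => (B ω, C ω, D ω)) :=
    ent_congr fun _ _ => by simp [and_assoc]
  have h₂ : ent μ (fun ω => (A ω, (B ω, C ω), D ω)) = ent μ (fun ω => (A ω, B ω, C ω, D ω)) :=
    ent_congr fun _ _ => by simp [and_assoc]
  simp only [cmi, h₁, h₂]
  ring

end Entropy

/-- The factorization `p(w,x,y,z) = p(w|x) p(x) p(y|x) p(z|y)`, cleared of denominators. -/
def IsMarkovChain4 {α β γ δ : Type*} [DecidableEq α] [DecidableEq β] [DecidableEq γ]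
    [DecidableEq δ] (μ : Ω → ℝ) (W : Ω → α) (X : Ω → β) (Y : Ω → γ) (Z : Ω → δ) : Prop :=
  ∀ w x y z, pr μ (fun ω => (W ω, X ω, Y ω, Z ω)) (w, x, y, z) * pr μ X x * pr μ Y y
    = pr μ (fun ω => (W ω, X ω)) (w, x) * pr μ (fun ω => (X ω, Y ω)) (x, y)
      * pr μ (fun ω => (Y ω, Z ω)) (y, z)

namespace IsMarkovChain4

variable {μ : Ω → ℝ} {α β γ δ : Type*} [DecidableEq α] [DecidableEq β] [DecidableEq γ]
  [DecidableEq δ] {W : Ω → α} {X : Ω → β} {Y : Ω → γ} {Z : Ω → δ}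

theorem drop_first [Fintype α] (hμ : ∀ ω, 0 ≤ μ ω) (h : IsMarkovChain4 μ W X Y Z) :
    IsMarkovChain μ X Y Z := by
  intro x y z
  have hsum := Finset.sum_congr rfl fun w (_ : w ∈ Finset.univ) => h w x y z
  simp only [← Finset.sum_mul, sum_pr_fst] at hsum
  refine (mul_eq_mul_right_iff.mp (?_ : _ = _ * pr μ X x)).elim id fun hx => ?_
  · linear_combination hsum
  · simp [pr_pair_eq_zero_left hμ hx]

theorem drop_last [Fintype δ] (hμ : ∀ ω, 0 ≤ μ ω) (h : IsMarkovChain4 μ W X Y Z) :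
    IsMarkovChain μ W X Y := by
  intro w x y
  have hsum := Finset.sum_congr rfl fun z (_ : z ∈ Finset.univ) => h w x y z
  simp only [← Finset.sum_mul, ← Finset.mul_sum, sum_pr_fourth_of_quadruple, sum_pr_snd] at hsum
  refine (mul_eq_mul_right_iff.mp (?_ : _ = _ * pr μ Y y)).elim id fun hy => ?_
  · linear_combination hsum
  · have hXY := pr_pair_eq_zero_right hμ hy X x
    simp [hXY, pr_pair_eq_zero_right hμ hXY]

theorem merge_last [Fintype α] (hμ : ∀ ω, 0 ≤ μ ω) (h : IsMarkovChain4 μ W X Y Z) :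
    IsMarkovChain μ W X (fun ω => (Y ω, Z ω)) := by
  rintro w x ⟨y, z⟩
  have hXYZ := h.drop_first hμ x y z
  refine (mul_eq_mul_right_iff.mp (?_ : _ = _ * pr μ Y y)).elim id fun hy => ?_
  · linear_combination h w x y z - pr μ (fun ω => (W ω, X ω)) (w, x) * hXYZ
  · have hXYZ₀ := pr_pair_eq_zero_right hμ (pr_pair_eq_zero_left hμ hy Z z) X x
    simp [hXYZ₀, pr_pair_eq_zero_right hμ hXYZ₀]

theorem drop_third [Fintype α] [Fintype γ] (hμ : ∀ ω, 0 ≤ μ ω) (h : IsMarkovChain4 μ W X Y Z) :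
    IsMarkovChain μ W X Z := fun w x z => by
  simpa only [← Finset.sum_mul, ← Finset.mul_sum, sum_pr_third_of_quadruple,
    sum_pr_snd_of_triple] using
    Finset.sum_congr rfl fun y (_ : y ∈ Finset.univ) => h.merge_last hμ w x (y, z)

theorem drop_second [Fintype β] [Fintype δ] (hμ : ∀ ω, 0 ≤ μ ω) (h : IsMarkovChain4 μ W X Y Z) :
    IsMarkovChain μ W Y Z := by
  intro w y z
  have hWXY := h.drop_last hμ
  have hWX_Y_Z : ∀ x, pr μ (fun ω => (W ω, X ω, Y ω, Z ω)) (w, x, y, z) * pr μ Y y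
      = pr μ (fun ω => (W ω, X ω, Y ω)) (w, x, y) * pr μ (fun ω => (Y ω, Z ω)) (y, z) := by
    intro x
    refine (mul_eq_mul_right_iff.mp (?_ : _ = _ * pr μ X x)).elim id fun hx => ?_
    · linear_combination h w x y z - pr μ (fun ω => (Y ω, Z ω)) (y, z) * hWXY w x y
    · simp [pr_pair_eq_zero_right hμ (pr_pair_eq_zero_left hμ hx _ _)]
  simpa only [← Finset.sum_mul, sum_pr_snd_of_triple] using
    Finset.sum_congr rfl fun x (_ : x ∈ Finset.univ) => hWX_Y_Z x

theorem cmi_eq_add [Fintype α] [Fintype β] [Fintype γ] [Fintype δ] (hμ : ∀ ω, 0 ≤ μ ω)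
    (h : IsMarkovChain4 μ W X Y Z) : cmi μ X W Z = cmi μ Y W Z + cmi μ X W Y := by
  have hWXZ := (h.drop_third hμ).ent_add hμ
  have hWYZ := (h.drop_second hμ).ent_add hμ
  have hWXY := (h.drop_last hμ).ent_add hμ
  rw [cmi, cmi, cmi, ent_triple_swap X W Z, ent_triple_swap Y W Z, ent_triple_swap X W Y]
  linarith

end IsMarkovChain4

/-- Under (W₁,W₂) ↔ X ↔ Y₁ ↔ Y₂,
I(X;W₂|Y₂) + I(X;W₁|W₂,Y₁)
  = I(X;W₁,W₂|Y₁,Y₂) + I(Y₁;W₂|Y₂) + I(X;W₁,W₂|Y₁) − I(X;W₁,W₂|Y₁,Y₂). -/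
theorem sum_rate_identity_expanded
    {Ω 𝒳 𝒴₁ 𝒴₂ 𝒲₁ 𝒲₂ : Type*} [Fintype Ω]
    [Fintype 𝒳] [DecidableEq 𝒳] [Fintype 𝒴₁] [DecidableEq 𝒴₁]
    [Fintype 𝒴₂] [DecidableEq 𝒴₂] [Fintype 𝒲₁] [DecidableEq 𝒲₁]
    [Fintype 𝒲₂] [DecidableEq 𝒲₂]
    (μ : Ω → ℝ) (hμ : IsPMF μ)
    (X : Ω → 𝒳) (Y₁ : Ω → 𝒴₁) (Y₂ : Ω → 𝒴₂) (W₁ : Ω → 𝒲₁) (W₂ : Ω → 𝒲₂)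
    (hMarkov : ∀ (w₁ : 𝒲₁) (w₂ : 𝒲₂) (x : 𝒳) (y₁ : 𝒴₁) (y₂ : 𝒴₂),
      pr μ (fun ω => (W₁ ω, W₂ ω, X ω, Y₁ ω, Y₂ ω)) (w₁, w₂, x, y₁, y₂)
          * pr μ X x * pr μ Y₁ y₁
        = pr μ (fun ω => (W₁ ω, W₂ ω, X ω)) (w₁, w₂, x)
          * pr μ (fun ω => (X ω, Y₁ ω)) (x, y₁)
          * pr μ (fun ω => (Y₁ ω, Y₂ ω)) (y₁, y₂)) :
    cmi μ X W₂ Y₂ + cmi μ X W₁ (fun ω => (W₂ ω, Y₁ ω))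
      = cmi μ X (fun ω => (W₁ ω, W₂ ω)) (fun ω => (Y₁ ω, Y₂ ω))
        + cmi μ Y₁ W₂ Y₂
        + cmi μ X (fun ω => (W₁ ω, W₂ ω)) Y₁
        - cmi μ X (fun ω => (W₁ ω, W₂ ω)) (fun ω => (Y₁ ω, Y₂ ω)) := by
  have hchain : IsMarkovChain4 μ W₂ X Y₁ Y₂ := fun w₂ x y₁ y₂ => by
    simpa only [← Finset.sum_mul, sum_pr_fst] using
      Finset.sum_congr rfl fun w₁ (_ : w₁ ∈ Finset.univ) => hMarkov w₁ w₂ x y₁ y₂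
  have hW₂ := hchain.cmi_eq_add hμ.1
  rw [cmi_pair_right X W₁ W₂ Y₁]
  linarith

end SIScalable
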